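/- Let n ≥ 2 be a natural number, let R be a commutative ring, let ℓ : R → ℝ be an additive group homomorphism, and let x, y, z ∈ R. Assume that ℓ((x − y)² · x^j · y^{n−2−j} · z) ≤ 0 for every natural number j with 0 ≤ j ≤ n−2, and that ℓ(y^n · z) ≥ 0. Then ℓ(x^n · z) ≤ n · ℓ(x · y^{n−1} · z). -/
import Mathlib


/-- Abstract deduction step in the proof of Proposition 6.1. -/
theorem intersection_estimate
    (n : ℕ) (hn : 2 ≤ n) (R : Type*) [CommRing R] (ℓ : R →+ ℝ) (x y z : R)
    (h1 : ∀ j : ℕ, j ≤ n - 2 → ℓ ((x - y) ^ 2 * x ^ j * y ^ (n - 2 - j) * z) ≤ 0)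
    (h2 : 0 ≤ ℓ (y ^ n * z)) :
    ℓ (x ^ n * z) ≤ (n : ℝ) * ℓ (x * y ^ (n - 1) * z) := by
  set b : ℕ → ℝ := fun k => ℓ (x ^ k * y ^ (n - k) * z) with hbdef
  -- second differences are ≤ 0
  have hb : ∀ j : ℕ, j ≤ n - 2 → b (j + 2) - 2 * b (j + 1) + b j ≤ 0 := by
    intro j hj
    have hm : n - 2 - j + 2 = n - j := by omega
    have hm1 : n - 2 - j + 1 = n - (j + 1) := by omega
    have hm2 : n - 2 - j = n - (j + 2) := by omega
    have key : (x - y) ^ 2 * x ^ j * y ^ (n - 2 - j) * z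
        = (x ^ (j + 2) * y ^ (n - 2 - j) * z + x ^ j * y ^ (n - 2 - j + 2) * z)
          - (x ^ (j + 1) * y ^ (n - 2 - j + 1) * z
            + x ^ (j + 1) * y ^ (n - 2 - j + 1) * z) := by
      ring
    have := h1 j hj
    rw [key, map_sub, map_add, map_add, hm, hm1, hm2] at this
    simp only [hbdef]
    linarith
  -- first differences
  set d : ℕ → ℝ := fun k => b (k + 1) - b k with hddef
  have hd : ∀ k : ℕ, k ≤ n - 2 → d (k + 1) ≤ d k := by
    intro k hk
    have := hb k hk
    simp only [hddef]
    linarith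
  have hd0 : ∀ k : ℕ, k ≤ n - 1 → d k ≤ d 0 := by
    intro k hk
    induction k with
    | zero => exact le_refl (d 0)
    | succ m ih =>
      have h1' : m ≤ n - 2 := by omega
      have := hd m h1'
      have := ih (by omega)
      linarith
  have hsum : b n - b 0 = ∑ k ∈ Finset.range n, d k := by
    rw [hddef]
    exact (Finset.sum_range_sub b n).symm
  have hle : ∑ k ∈ Finset.range n, d k ≤ (n : ℝ) * d 0 := by
    calc ∑ k ∈ Finset.range n, d k ≤ ∑ _k ∈ Finset.range n, d 0 := by
          apply Finset.sum_le_sum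
          intro i hi
          exact hd0 i (by simp at hi; omega)
      _ = (n : ℝ) * d 0 := by
          rw [Finset.sum_const, Finset.card_range, nsmul_eq_mul]
  have hbn : b n ≤ (n : ℝ) * b 1 + (1 - (n : ℝ)) * b 0 := by
    have : d 0 = b 1 - b 0 := rfl
    nlinarith [hsum, hle]
  have hb0 : 0 ≤ b 0 := by
    simpa only [hbdef, pow_zero, one_mul, Nat.sub_zero] using h2
  have hn1 : (1 : ℝ) ≤ (n : ℝ) := by exact_mod_cast Nat.one_le_of_lt hn
  have hbn' : b n ≤ (n : ℝ) * b 1 := by nlinarith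
  have e1 : b n = ℓ (x ^ n * z) := by
    simp only [hbdef, Nat.sub_self, pow_zero, mul_one]
  have e2 : b 1 = ℓ (x * y ^ (n - 1) * z) := by
    simp only [hbdef, pow_one]
  rw [← e1, ← e2]
  exact hbn'
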